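/- Jacobian of the Cholesky map in the nonsingular real case: the smooth map T ↦ Tᵀ T from the open set of m×m upper triangular matrices with positive diagonal onto the cone of symmetric positive definite matrices is a diffeomorphism, and the absolute value of its Jacobian determinant at T equals 2^m ∏_{i=1}^m t_{ii}^(m−i+1). -/

import Mathlib

open Matrix

/-- Index type for the independent entries of upper-triangular /
symmetric `m × m` matrices. -/
abbrev TriIdx (m : ℕ) := { p : Fin m × Fin m // p.1 ≤ p.2 }

/-- The upper-triangular matrix built from its coordinates. -/
def utOf {m : ℕ} (x : TriIdx m → ℝ) : Matrix (Fin m) (Fin m) ℝ :=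
  fun i j => if h : i ≤ j then x ⟨(i, j), h⟩ else 0

/-- The symmetric matrix built from its upper-triangular coordinates. -/
def symMatOf {m : ℕ} (y : TriIdx m → ℝ) : Matrix (Fin m) (Fin m) ℝ :=
  fun i j => if h : i ≤ j then y ⟨(i, j), h⟩ else y ⟨(j, i), le_of_not_ge h⟩

/-- The coordinates of a matrix on and above the diagonal. -/
def coordsOf {m : ℕ} (M : Matrix (Fin m) (Fin m) ℝ) : TriIdx m → ℝ :=
  fun p => M p.1.1 p.1.2

/-!
Existence of the factorisation comes from the LDL decomposition `S = L D Lᵀ` (Gram–Schmidt):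
`T = √D Lᵀ` works once the signs of its rows are normalised. Uniqueness: if `T₁ᵀ T₁ = T₂ᵀ T₂`,
then `U = T₁ T₂⁻¹` is orthogonal and upper triangular, hence diagonal with entries `±1`, and the
positive diagonals force `U = 1`.

For the Jacobian, `∂(TᵀT)ᵢⱼ / ∂tₖₗ = δⱼₗ tₖᵢ + δᵢₗ tₖⱼ` vanishes whenever `(i, j) <ₗₑₓ (k, l)`, so
the Jacobian matrix is triangular for the lexicographic order on the coordinates; its diagonal entry
at `(i, j)` is `2tᵢᵢ` if `i = j` and `tᵢᵢ` if `i < j`, so `tᵢᵢ` occurs `m - i` times (`i` counted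
from `0`).
-/

namespace Matrix

theorem BlockTriangular.det_of_injective {ι α R : Type*} [CommRing R] [Fintype ι]
    [DecidableEq ι] [LinearOrder α] {M : Matrix ι ι R} {b : ι → α} (hb : Function.Injective b)
    (hM : M.BlockTriangular b) : M.det = ∏ i, M i i := by
  rw [hM.det, Finset.prod_image fun _ _ _ _ h => hb h]
  refine Finset.prod_congr rfl fun i _ => ?_
  let : Unique {j // b j = b i} := ⟨⟨⟨i, rfl⟩⟩, fun j => Subtype.ext (hb j.2)⟩
  exact (det_unique _).trans rfl

variable {n : Type*} [Fintype n]

theorem PosDef.transpose_mul_self_of_det_ne_zero [DecidableEq n] {T : Matrix n n ℝ}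
    (hT : T.det ≠ 0) :
    (Tᵀ * T).PosDef := by
  simpa [conjTranspose_eq_transpose_of_trivial] using PosDef.conjTranspose_mul_self T
    (mulVec_injective_iff_isUnit.2 ((isUnit_iff_isUnit_det T).2 (isUnit_iff_ne_zero.2 hT)))

variable [LinearOrder n]

theorem IsUpperTriangular.eq_diagonal_of_transpose_mul_self_eq_one {R : Type*} [CommRing R]
    {U : Matrix n n R} (hU : U.IsUpperTriangular) (h : Uᵀ * U = 1) :
    U = diagonal U.diag := by
  have : Invertible U := invertibleOfLeftInverse U Uᵀ h
  have hUt : Uᵀ.IsUpperTriangular := by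
    simpa [inv_eq_left_inv h] using blockTriangular_inv_of_blockTriangular hU
  ext i j
  rcases lt_trichotomy i j with hij | rfl | hij
  · simpa [hij.ne] using hUt hij
  · simp
  · simpa [hij.ne'] using hU hij

theorem IsUpperTriangular.eq_of_transpose_mul_self_eq {R : Type*} [Field R] [LinearOrder R]
    [IsStrictOrderedRing R] {T₁ T₂ : Matrix n n R} (hT₁ : T₁.IsUpperTriangular)
    (hT₂ : T₂.IsUpperTriangular) (hd₁ : ∀ i, 0 < T₁ i i) (hd₂ : ∀ i, 0 < T₂ i i)
    (h : T₁ᵀ * T₁ = T₂ᵀ * T₂) : T₁ = T₂ := by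
  have : Invertible T₂ := invertibleOfIsUnitDet T₂ <| isUnit_iff_ne_zero.2 <| by
    rw [det_of_isUpperTriangular hT₂]
    exact (Finset.prod_pos fun i _ => hd₂ i).ne'
  set U := T₁ * T₂⁻¹
  have hUT₂ : U * T₂ = T₁ := inv_mul_cancel_right_of_invertible T₂ T₁
  have hU : Uᵀ * U = 1 := by
    calc Uᵀ * U = (T₂⁻¹)ᵀ * (T₁ᵀ * T₁) * T₂⁻¹ := by simp only [U, transpose_mul, Matrix.mul_assoc]
      _ = 1 := by
        rw [h, ← Matrix.mul_assoc, ← transpose_mul, mul_inv_of_invertible, transpose_one,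
          Matrix.one_mul, mul_inv_of_invertible]
  have hUt : U.IsUpperTriangular := hT₁.mul (blockTriangular_inv_of_blockTriangular hT₂)
  have hUdiag := hUt.eq_diagonal_of_transpose_mul_self_eq_one hU
  have hT₁ : T₁ = diagonal U.diag * T₂ := by rw [← hUdiag, hUT₂]
  have hpos : ∀ i, 0 < U i i := fun i => by
    have := hd₁ i
    rw [hT₁, diagonal_mul] at this
    exact pos_of_mul_pos_left this (hd₂ i).le
  have hsq : ∀ i, U i i * U i i = 1 := fun i => by
    have hdiag : (diagonal U.diag)ᵀ * diagonal U.diag = 1 := hUdiag ▸ hU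
    simpa [diagonal_transpose, diagonal_mul_diagonal] using congr_fun₂ hdiag i i
  have hone : diagonal U.diag = 1 := by
    rw [← diagonal_one]
    congr 1
    ext i
    exact (mul_self_eq_one_iff.1 (hsq i)).resolve_right (by linarith [hpos i])
  rw [hT₁, hone, Matrix.one_mul]

theorem IsUpperTriangular.exists_diag_pos_transpose_mul_self_eq {R : Type*} [Field R]
    [LinearOrder R] [IsStrictOrderedRing R] {T : Matrix n n R} (hT : T.IsUpperTriangular)
    (hdet : T.det ≠ 0) :
    ∃ T' : Matrix n n R, T'.IsUpperTriangular ∧ (∀ i, 0 < T' i i) ∧ T'ᵀ * T' = Tᵀ * T := by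
  have hd : ∀ i, T i i ≠ 0 := by
    rw [det_of_isUpperTriangular hT] at hdet
    exact fun i => Finset.prod_ne_zero_iff.1 hdet i (Finset.mem_univ i)
  set ε : n → R := fun i => |T i i| / T i i
  have hε : ∀ i, ε i * ε i = 1 := fun i => by
    rw [div_mul_div_comm, abs_mul_abs_self, div_self (mul_ne_zero (hd i) (hd i))]
  refine ⟨diagonal ε * T, (blockTriangular_diagonal ε).mul hT, fun i => ?_, ?_⟩
  · rw [diagonal_mul, div_mul_cancel₀ _ (hd i)]
    exact abs_pos.2 (hd i)
  · rw [transpose_mul, diagonal_transpose, Matrix.mul_assoc, ← Matrix.mul_assoc (diagonal ε),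
      diagonal_mul_diagonal, funext hε, diagonal_one, Matrix.one_mul]

theorem LDL.diagEntries_pos [WellFoundedLT n] [LocallyFiniteOrderBot n] {S : Matrix n n ℝ}
    (hS : S.PosDef) (i : n) : 0 < LDL.diagEntries hS i := by
  have hv : LDL.lowerInv hS i ≠ 0 := fun h =>
    ((isUnit_iff_isUnit_det _).1 (isUnit_of_invertible (LDL.lowerInv hS))).ne_zero
      (det_eq_zero_of_row_eq_zero i fun j => congrFun h j)
  rw [LDL.diagEntries, EuclideanSpace.inner_toLp_toLp, star_star, star_trivial, dotProduct_comm]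
  exact hS.dotProduct_mulVec_pos hv

theorem PosDef.exists_isUpperTriangular_transpose_mul_self_eq [WellFoundedLT n]
    [LocallyFiniteOrderBot n] {S : Matrix n n ℝ} (hS : S.PosDef) :
    ∃ T : Matrix n n ℝ, T.IsUpperTriangular ∧ (∀ i, 0 < T i i) ∧ Tᵀ * T = S := by
  set T := diagonal (fun i => √(LDL.diagEntries hS i)) * (LDL.lower hS)ᵀ
  have hL : (LDL.lower hS).IsLowerTriangular :=
    blockTriangular_inv_of_blockTriangular fun _ _ hij => LDL.lowerInv_triangular hS hij
  have hT : T.IsUpperTriangular := (blockTriangular_diagonal _).mul hL.transpose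
  have hsq : (fun i => √(LDL.diagEntries hS i) * √(LDL.diagEntries hS i)) = LDL.diagEntries hS :=
    funext fun i => Real.mul_self_sqrt (LDL.diagEntries_pos hS i).le
  have hTS : Tᵀ * T = S := by
    calc Tᵀ * T = LDL.lower hS * diagonal (LDL.diagEntries hS) * (LDL.lower hS)ᵀ := by
          rw [transpose_mul, diagonal_transpose, transpose_transpose, Matrix.mul_assoc,
            ← Matrix.mul_assoc (diagonal _), diagonal_mul_diagonal, hsq, Matrix.mul_assoc]
      _ = S := by
          simpa [LDL.diag, conjTranspose_eq_transpose_of_trivial] using LDL.lower_conj_diag hS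
  have hdet : T.det ≠ 0 := fun h => hS.det_pos.ne' <| by
    rw [← hTS, det_mul, h, mul_zero]
  rw [← hTS]
  exact hT.exists_diag_pos_transpose_mul_self_eq hdet

end Matrix

variable {m : ℕ}

theorem utOf_isUpperTriangular (x : TriIdx m → ℝ) : (utOf x).IsUpperTriangular :=
  fun _ _ h => dif_neg (not_le.2 h)

@[simp]
theorem utOf_apply_self (x : TriIdx m → ℝ) (i : Fin m) : utOf x i i = x ⟨(i, i), le_refl i⟩ := by
  simp [utOf]

@[simp]
theorem coordsOf_utOf (x : TriIdx m → ℝ) : coordsOf (utOf x) = x :=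
  funext fun p => dif_pos p.2

theorem utOf_coordsOf {T : Matrix (Fin m) (Fin m) ℝ} (hT : T.IsUpperTriangular) :
    utOf (coordsOf T) = T := by
  ext i j
  by_cases h : i ≤ j
  · simp [utOf, coordsOf, h]
  · simpa [utOf, h] using (hT (not_le.1 h)).symm

theorem symMatOf_coordsOf {M : Matrix (Fin m) (Fin m) ℝ} (hM : M.IsSymm) :
    symMatOf (coordsOf M) = M := by
  ext i j
  by_cases h : i ≤ j
  · simp [symMatOf, coordsOf, h]
  · simpa [symMatOf, coordsOf, h] using hM.apply i j

@[simp]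
theorem coordsOf_symMatOf (y : TriIdx m → ℝ) : coordsOf (symMatOf y) = y :=
  funext fun p => dif_pos p.2

def gramCoords (x : TriIdx m → ℝ) : TriIdx m → ℝ := coordsOf ((utOf x)ᵀ * utOf x)

theorem symMatOf_gramCoords (x : TriIdx m → ℝ) :
    symMatOf (gramCoords x) = (utOf x)ᵀ * utOf x :=
  symMatOf_coordsOf (isSymm_transpose_mul_self _)

theorem bijOn_gramCoords :
    Set.BijOn gramCoords {x : TriIdx m → ℝ | ∀ i, 0 < x ⟨(i, i), le_refl i⟩}
      {y | (symMatOf y).PosDef} := by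
  refine ⟨fun x hx => ?_, fun x₁ hx₁ x₂ hx₂ h => ?_, fun y hy => ?_⟩
  · have hdet : (utOf x).det ≠ 0 := by
      rw [det_of_isUpperTriangular (utOf_isUpperTriangular x)]
      exact (Finset.prod_pos fun i _ => by simpa using hx i).ne'
    show (symMatOf (gramCoords x)).PosDef
    rw [symMatOf_gramCoords]
    exact PosDef.transpose_mul_self_of_det_ne_zero hdet
  · have := congrArg symMatOf h
    rw [symMatOf_gramCoords, symMatOf_gramCoords] at this
    simpa using congrArg coordsOf <| (utOf_isUpperTriangular x₁).eq_of_transpose_mul_self_eq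
      (utOf_isUpperTriangular x₂) (by simpa using hx₁) (by simpa using hx₂) this
  · obtain ⟨T, hT, hdiag, hTy⟩ := PosDef.exists_isUpperTriangular_transpose_mul_self_eq hy
    exact ⟨coordsOf T, hdiag, by rw [gramCoords, utOf_coordsOf hT, hTy, coordsOf_symMatOf]⟩

def utEntry (k l : Fin m) : (TriIdx m → ℝ) →L[ℝ] ℝ :=
  if h : k ≤ l then ContinuousLinearMap.proj (⟨(k, l), h⟩ : TriIdx m) else 0

@[simp]
theorem utEntry_apply (k l : Fin m) (v : TriIdx m → ℝ) : utEntry k l v = utOf v k l := by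
  by_cases h : k ≤ l <;> simp [utEntry, utOf, h]

def gramDeriv (x : TriIdx m → ℝ) : (TriIdx m → ℝ) →L[ℝ] (TriIdx m → ℝ) :=
  ContinuousLinearMap.pi fun p =>
    ∑ k, (utOf x k p.1.1 • utEntry k p.1.2 + utOf x k p.1.2 • utEntry k p.1.1)

theorem hasFDerivAt_gramCoords (x : TriIdx m → ℝ) :
    HasFDerivAt gramCoords (gramDeriv x) x := by
  refine hasFDerivAt_pi.2 fun p => ?_
  have hentry (k l : Fin m) : HasFDerivAt (fun z => utOf z k l) (utEntry k l) x := by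
    convert (utEntry k l).hasFDerivAt using 1
    exact funext fun v => (utEntry_apply k l v).symm
  simp only [gramCoords, coordsOf, mul_apply, transpose_apply]
  exact HasFDerivAt.fun_sum fun k _ => (hentry k p.1.1).mul (hentry k p.1.2)

theorem utOf_single (q : TriIdx m) (k l : Fin m) :
    utOf (Pi.single q 1) k l = if k = q.1.1 ∧ l = q.1.2 then 1 else 0 := by
  by_cases h : k ≤ l
  · simp [utOf, h, Pi.single_apply, Subtype.ext_iff, Prod.ext_iff]
  · simp only [utOf, h, dite_false]
    rw [if_neg]
    rintro ⟨rfl, rfl⟩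
    exact h q.2

theorem toMatrix'_gramDeriv (x : TriIdx m → ℝ) (p q : TriIdx m) :
    LinearMap.toMatrix' (gramDeriv x : (TriIdx m → ℝ) →ₗ[ℝ] (TriIdx m → ℝ)) p q =
      (if p.1.2 = q.1.2 then utOf x q.1.1 p.1.1 else 0) +
        (if p.1.1 = q.1.2 then utOf x q.1.1 p.1.2 else 0) := by
  simp [LinearMap.toMatrix'_apply, gramDeriv, utOf_single, Finset.sum_add_distrib, ite_and]

theorem prod_triIdx {M : Type*} [CommMonoid M] (f : Fin m → Fin m → M) :
    ∏ p : TriIdx m, f p.1.1 p.1.2 = ∏ i, ∏ j ∈ Finset.Ici i, f i j := by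
  rw [← Finset.prod_subtype (Finset.univ.filter fun p : Fin m × Fin m => p.1 ≤ p.2) (by simp)
    (fun p => f p.1 p.2), Finset.prod_filter, Fintype.prod_prod_type]
  refine Finset.prod_congr rfl fun i _ => ?_
  rw [← Finset.prod_filter]
  congr 1
  ext j
  simp

theorem blockTriangular_toMatrix'_gramDeriv (x : TriIdx m → ℝ) :
    (LinearMap.toMatrix' (gramDeriv x : (TriIdx m → ℝ) →ₗ[ℝ] (TriIdx m → ℝ))).BlockTriangular
      fun p => OrderDual.toDual (toLex p.1) := by
  rintro ⟨⟨i, j⟩, hij⟩ ⟨⟨k, l⟩, hkl⟩ h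
  have hlex : toLex (i, j) < toLex (k, l) := h
  rw [toMatrix'_gramDeriv]
  rcases Prod.Lex.toLex_lt_toLex.1 hlex with hik | ⟨rfl, hjl⟩
  · have hil : i ≠ l := fun he => (hik.trans_le (hkl.trans_eq he.symm)).false
    simp [hil, utOf, not_le.2 hik]
  · have hil : i ≠ l := fun he => (hjl.trans_le (he ▸ hij)).false
    simp [hil, hjl.ne]

theorem det_gramDeriv (x : TriIdx m → ℝ) :
    LinearMap.det (gramDeriv x : (TriIdx m → ℝ) →ₗ[ℝ] (TriIdx m → ℝ)) =
      2 ^ m * ∏ i : Fin m, x ⟨(i, i), le_refl i⟩ ^ (m - (i : ℕ)) := by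
  have hinj : Function.Injective fun p : TriIdx m => OrderDual.toDual (toLex p.1) :=
    fun _ _ h => Subtype.ext (toLex.injective h)
  have hdiag (p : TriIdx m) :
      LinearMap.toMatrix' (gramDeriv x : (TriIdx m → ℝ) →ₗ[ℝ] (TriIdx m → ℝ)) p p =
        (if p.1.1 = p.1.2 then 2 else 1) * x ⟨(p.1.1, p.1.1), le_refl _⟩ := by
    obtain ⟨⟨i, j⟩, hij⟩ := p
    rw [toMatrix'_gramDeriv]
    by_cases h : i = j
    · subst h
      simp [two_mul]
    · simp [h]
  rw [← LinearMap.det_toMatrix', (blockTriangular_toMatrix'_gramDeriv x).det_of_injective hinj]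
  simp only [hdiag,
    prod_triIdx fun i j => (if i = j then (2 : ℝ) else 1) * x ⟨(i, i), le_refl _⟩,
    Finset.prod_mul_distrib, Finset.prod_ite_eq, Finset.mem_Ici, le_refl, if_true,
    Finset.prod_const, Fin.card_Ici, Finset.card_univ, Fintype.card_fin]

theorem stmt_15 (m : ℕ)
    (φ : (TriIdx m → ℝ) → (TriIdx m → ℝ))
    (hφ : ∀ x, φ x = coordsOf ((utOf x)ᵀ * utOf x)) :
    Set.BijOn φ {x | ∀ i : Fin m, 0 < x ⟨(i, i), le_refl i⟩}
      {y | (symMatOf y).PosDef} ∧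
    ∀ x ∈ {x : TriIdx m → ℝ | ∀ i : Fin m, 0 < x ⟨(i, i), le_refl i⟩},
      |LinearMap.det (fderiv ℝ φ x : (TriIdx m → ℝ) →ₗ[ℝ] (TriIdx m → ℝ))|
        = 2 ^ m * ∏ i : Fin m, x ⟨(i, i), le_refl i⟩ ^ (m - (i : ℕ)) := by
  obtain rfl : φ = gramCoords := funext hφ
  refine ⟨bijOn_gramCoords, fun x hx => ?_⟩
  rw [(hasFDerivAt_gramCoords x).fderiv, det_gramDeriv]
  exact abs_of_pos <| mul_pos (by positivity) <| Finset.prod_pos fun i _ => pow_pos (hx i) _
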